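/- If Y, Z are finite strings of positive integers with [0; Ȳ] < [0; Z̄] (periodic continued fractions), then [0; Z, Ȳ] > [0; Ȳ]. -/

import Mathlib

noncomputable def cf (S : List ℕ) (x : ℝ) : ℝ :=
  S.foldr (fun a y => 1 / ((a : ℝ) + y)) x

/-!
On `[0, ∞)` the map `cf Z` is a Möbius transformation `x ↦ (p x + q) / (r x + s)` with
`p, r ≥ 0` and `q, s > 0`. Hence `x ↦ p x + q - x (r x + s)` is a concave quadratic which is
positive at `0` and vanishes at the fixed point `z`, so it is positive on `[0, z)`;
that is, `y < cf Z y` for every `0 ≤ y < z`.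
-/

theorem cf_cons (a : ℕ) (S : List ℕ) (x : ℝ) : cf (a :: S) x = 1 / (a + cf S x) := rfl

noncomputable def moebius (p q r s x : ℝ) : ℝ := (p * x + q) / (r * x + s)

theorem one_div_add_moebius {a p q r s x : ℝ} (hden : r * x + s ≠ 0) :
    1 / (a + moebius p q r s x) = moebius r s (a * r + p) (a * s + q) x := by
  rw [moebius, moebius, add_div' _ _ _ hden, one_div_div]
  ring

theorem exists_eqOn_cf_cons_moebius (a : ℕ) (T : List ℕ) (h : ∀ b ∈ a :: T, 1 ≤ b) :
    ∃ p q r s : ℝ, 0 ≤ p ∧ 0 < q ∧ 0 ≤ r ∧ 0 < s ∧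
      Set.EqOn (cf (a :: T)) (moebius p q r s) (Set.Ici 0) := by
  induction T generalizing a with
  | nil =>
    have ha : (1 : ℝ) ≤ a := by exact_mod_cast h a List.mem_cons_self
    refine ⟨0, 1, 1, a, le_rfl, one_pos, zero_le_one, by linarith, fun x hx => ?_⟩
    rw [cf_cons, moebius, zero_mul, zero_add, one_mul, add_comm]
    rfl
  | cons b T ih =>
    obtain ⟨p, q, r, s, hp, hq, hr, hs, hcf⟩ := ih b fun c hc => h c (List.mem_cons_of_mem a hc)
    refine ⟨r, s, a * r + p, a * s + q, hr, hs, by positivity, by positivity,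
      fun x (hx : 0 ≤ x) => ?_⟩
    rw [cf_cons, hcf hx, one_div_add_moebius (by positivity : r * x + s > 0).ne']

theorem lt_moebius_of_lt_isFixedPt {p q r s y z : ℝ} (hq : 0 < q) (hr : 0 ≤ r) (hs : 0 < s)
    (hy : 0 ≤ y) (hyz : y < z) (hz : Function.IsFixedPt (moebius p q r s) z) :
    y < moebius p q r s y := by
  have hz0 : 0 < z := hy.trans_lt hyz
  have hfix : p * z + q = z * (r * z + s) := (div_eq_iff (by positivity)).mp hz.eq
  have hp : p < r * z + s :=
    lt_of_mul_lt_mul_right (show p * z < (r * z + s) * z by linarith) hz0.le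
  have hgap : p * y + q - y * (r * y + s) = (z - y) * (r * (z + y) + s - p) := by
    linear_combination hfix
  have hgap_pos : 0 < (z - y) * (r * (z + y) + s - p) :=
    mul_pos (by linarith) (by linarith [mul_nonneg hr hy])
  rw [moebius, lt_div_iff₀ (by positivity)]
  linarith

theorem prepend_of_periodic_lt_general (Z : List ℕ) (hZ : Z ≠ [])
    (hZpos : ∀ a ∈ Z, 1 ≤ a)
    (y z : ℝ) (hy : y ∈ Set.Icc (0:ℝ) 1)
    (hfz : cf Z z = z)
    (hlt : y < z) : y < cf Z y := by
  obtain ⟨a, T, rfl⟩ := List.exists_cons_of_ne_nil hZ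
  obtain ⟨p, q, r, s, -, hq, hr, hs, hcf⟩ := exists_eqOn_cf_cons_moebius a T hZpos
  have hz : 0 ≤ z := hy.1.trans hlt.le
  rw [hcf hy.1]
  exact lt_moebius_of_lt_isFixedPt hq hr hs hy.1 hlt ((hcf hz).symm.trans hfz)

/-- If `[0;Ȳ] < [0;Z̄]` then `[0;Z,Ȳ] > [0;Ȳ]`. Here the periodic points
`y = [0;Ȳ]`, `z = [0;Z̄]` are the fixed points in `[0,1]` of `cf Y`, `cf Z`,
and `[0;Z,Ȳ] = cf Z y`. -/
theorem prepend_of_periodic_lt (Y Z : List ℕ) (hY : Y ≠ []) (hZ : Z ≠ [])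
    (hYpos : ∀ a ∈ Y, 1 ≤ a) (hZpos : ∀ a ∈ Z, 1 ≤ a)
    (y z : ℝ) (hy : y ∈ Set.Icc (0:ℝ) 1) (hfy : cf Y y = y)
    (hz : z ∈ Set.Icc (0:ℝ) 1) (hfz : cf Z z = z)
    (hlt : y < z) : y < cf Z y :=
  prepend_of_periodic_lt_general Z hZ hZpos y z hy hfz hlt
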